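/- arXiv:1706.01943 — 2 statements merged into one kernel-verified Lean document; each statement's English description precedes it below -/
import Mathlib

section
/- Let m ≥ 1, h > 0, and φ : ℤ² → ℝ be m-periodic in both arguments. With ‖∇_hφ‖₂² = h²Σ_{i,j}((D_xφ)_{i+1/2,j}²) + h²Σ_{i,j}((D_yφ)_{i,j+1/2}²) and ‖∇_hᵛφ‖₂² = h²Σ_{i,j}((𝔇_xφ)_{i+1/2,j+1/2}² + (𝔇_yφ)_{i+1/2,j+1/2}²), one has ‖∇_hφ‖₂² ≥ ‖∇_hᵛφ‖₂². -/
/-- Shifted sum of a periodic sequence. -/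
lemma shift_sum_aux (m : ℕ) (g : ℕ → ℝ) (hg : g m = g 0) :
    ∑ j ∈ Finset.range m, g (j+1) = ∑ j ∈ Finset.range m, g j := by
  have h1 := Finset.sum_range_succ g m
  have h2 := Finset.sum_range_succ' g m
  rw [h1] at h2
  linarith

/-- Lemma 2.1: the full discrete gradient norm dominates the skew gradient
norm, for an `m`-periodic grid function. -/
theorem grad_ge_skew_grad (m : ℕ) (hm : 1 ≤ m) (h : ℝ) (hh : 0 < h)
    (φ : ℤ → ℤ → ℝ)
    (hper1 : ∀ i j : ℤ, φ (i + m) j = φ i j)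
    (hper2 : ∀ i j : ℤ, φ i (j + m) = φ i j) :
    h^2 * ∑ i ∈ Finset.range m, ∑ j ∈ Finset.range m,
        ((φ (i+1) j - φ i j) / h)^2
    + h^2 * ∑ i ∈ Finset.range m, ∑ j ∈ Finset.range m,
        ((φ i (j+1) - φ i j) / h)^2
    ≥ h^2 * ∑ i ∈ Finset.range m, ∑ j ∈ Finset.range m,
        (((φ (i+1) (j+1) - φ i (j+1) + φ (i+1) j - φ i j) / (2*h))^2
         + ((φ (i+1) (j+1) - φ (i+1) j + φ i (j+1) - φ i j) / (2*h))^2) := by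
  set a : ℤ → ℤ → ℝ := fun i j => (φ (i+1) j - φ i j) / h with ha
  set b : ℤ → ℤ → ℝ := fun i j => (φ i (j+1) - φ i j) / h with hb
  have hx : ∀ i j : ℤ,
      ((φ (i+1) (j+1) - φ i (j+1) + φ (i+1) j - φ i j) / (2*h))^2
        ≤ (a i j ^ 2 + a i (j+1) ^ 2) / 2 := by
    intro i j
    have : (φ (i+1) (j+1) - φ i (j+1) + φ (i+1) j - φ i j) / (2*h)
        = (a i j + a i (j+1)) / 2 := by
      simp only [ha]; field_simp; ring
    rw [this]
    nlinarith [sq_nonneg (a i j - a i (j+1))]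
  have hy : ∀ i j : ℤ,
      ((φ (i+1) (j+1) - φ (i+1) j + φ i (j+1) - φ i j) / (2*h))^2
        ≤ (b i j ^ 2 + b (i+1) j ^ 2) / 2 := by
    intro i j
    have : (φ (i+1) (j+1) - φ (i+1) j + φ i (j+1) - φ i j) / (2*h)
        = (b i j + b (i+1) j) / 2 := by
      simp only [hb]; field_simp; ring
    rw [this]
    nlinarith [sq_nonneg (b i j - b (i+1) j)]
  -- shifted sums equal unshifted sums by periodicity
  have hxshift : ∀ i : ℤ, ∑ j ∈ Finset.range m, a i ((j:ℤ)+1) ^ 2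
      = ∑ j ∈ Finset.range m, a i (j:ℤ) ^ 2 := by
    intro i
    have := shift_sum_aux m (fun j => a i (j:ℤ) ^ 2) ?_
    · simpa using this
    · simp only [ha]
      have h1 : φ (i+1) ((0:ℤ) + m) = φ (i+1) 0 := hper2 (i+1) 0
      have h2 : φ i ((0:ℤ) + m) = φ i 0 := hper2 i 0
      simp only [zero_add] at h1 h2
      simp [h1, h2]
  have hyshift : ∀ j : ℤ, ∑ i ∈ Finset.range m, b ((i:ℤ)+1) j ^ 2
      = ∑ i ∈ Finset.range m, b (i:ℤ) j ^ 2 := by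
    intro j
    have := shift_sum_aux m (fun i => b (i:ℤ) j ^ 2) ?_
    · simpa using this
    · simp only [hb]
      have h1 : φ ((0:ℤ) + m) (j+1) = φ 0 (j+1) := hper1 0 (j+1)
      have h2 : φ ((0:ℤ) + m) j = φ 0 j := hper1 0 j
      simp only [zero_add] at h1 h2
      simp [h1, h2]
  have key : ∑ i ∈ Finset.range m, ∑ j ∈ Finset.range m,
        (((φ (i+1) (j+1) - φ i (j+1) + φ (i+1) j - φ i j) / (2*h))^2
         + ((φ (i+1) (j+1) - φ (i+1) j + φ i (j+1) - φ i j) / (2*h))^2)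
      ≤ ∑ i ∈ Finset.range m, ∑ j ∈ Finset.range m, a i j ^ 2
        + ∑ i ∈ Finset.range m, ∑ j ∈ Finset.range m, b i j ^ 2 := by
    have hstep : ∑ i ∈ Finset.range m, ∑ j ∈ Finset.range m,
        (((φ (i+1) (j+1) - φ i (j+1) + φ (i+1) j - φ i j) / (2*h))^2
         + ((φ (i+1) (j+1) - φ (i+1) j + φ i (j+1) - φ i j) / (2*h))^2)
        ≤ ∑ i ∈ Finset.range m, ∑ j ∈ Finset.range m,
          ((a i j ^ 2 + a i (j+1) ^ 2) / 2 + (b i j ^ 2 + b (i+1) j ^ 2) / 2) := by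
      apply Finset.sum_le_sum; intro i _
      apply Finset.sum_le_sum; intro j _
      exact add_le_add (hx i j) (hy i j)
    refine hstep.trans_eq ?_
    have e1 : ∑ i ∈ Finset.range m, ∑ j ∈ Finset.range m,
        ((a i j ^ 2 + a i ((j:ℤ)+1) ^ 2) / 2 + (b i j ^ 2 + b ((i:ℤ)+1) j ^ 2) / 2)
        = (∑ i ∈ Finset.range m, ∑ j ∈ Finset.range m, (a i j ^ 2 + a i ((j:ℤ)+1) ^ 2) / 2)
        + ∑ i ∈ Finset.range m, ∑ j ∈ Finset.range m, (b i j ^ 2 + b ((i:ℤ)+1) j ^ 2) / 2 := by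
      rw [← Finset.sum_add_distrib]
      congr 1; ext i
      rw [← Finset.sum_add_distrib]
    rw [e1]
    congr 1
    · apply Finset.sum_congr rfl
      intro i _
      have e2 : ∑ j ∈ Finset.range m, (a (i:ℤ) j ^ 2 + a i ((j:ℤ)+1) ^ 2) / 2
          = ((∑ j ∈ Finset.range m, a (i:ℤ) (j:ℤ) ^ 2)
            + ∑ j ∈ Finset.range m, a (i:ℤ) ((j:ℤ)+1) ^ 2) / 2 := by
        rw [← Finset.sum_add_distrib, ← Finset.sum_div]
      rw [e2, hxshift i]; ring
    · calc ∑ i ∈ Finset.range m, ∑ j ∈ Finset.range m,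
            (b (i:ℤ) (j:ℤ) ^ 2 + b ((i:ℤ)+1) (j:ℤ) ^ 2) / 2
          = ∑ j ∈ Finset.range m, ∑ i ∈ Finset.range m,
            (b (i:ℤ) (j:ℤ) ^ 2 + b ((i:ℤ)+1) (j:ℤ) ^ 2) / 2 := Finset.sum_comm
        _ = ∑ j ∈ Finset.range m, ∑ i ∈ Finset.range m, b (i:ℤ) (j:ℤ) ^ 2 := by
            apply Finset.sum_congr rfl
            intro j _
            have e2 : ∑ i ∈ Finset.range m, (b (i:ℤ) j ^ 2 + b ((i:ℤ)+1) j ^ 2) / 2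
                = ((∑ i ∈ Finset.range m, b (i:ℤ) (j:ℤ) ^ 2)
                  + ∑ i ∈ Finset.range m, b ((i:ℤ)+1) (j:ℤ) ^ 2) / 2 := by
              rw [← Finset.sum_add_distrib, ← Finset.sum_div]
            rw [e2, hyshift j]; ring
        _ = ∑ i ∈ Finset.range m, ∑ j ∈ Finset.range m, b (i:ℤ) (j:ℤ) ^ 2 := Finset.sum_comm
  have hh2 : (0:ℝ) ≤ h^2 := sq_nonneg h
  calc h^2 * ∑ i ∈ Finset.range m, ∑ j ∈ Finset.range m,
        (((φ (i+1) (j+1) - φ i (j+1) + φ (i+1) j - φ i j) / (2*h))^2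
         + ((φ (i+1) (j+1) - φ (i+1) j + φ i (j+1) - φ i j) / (2*h))^2)
      ≤ h^2 * (∑ i ∈ Finset.range m, ∑ j ∈ Finset.range m, a i j ^ 2
        + ∑ i ∈ Finset.range m, ∑ j ∈ Finset.range m, b i j ^ 2) :=
        mul_le_mul_of_nonneg_left key hh2
    _ = h^2 * ∑ i ∈ Finset.range m, ∑ j ∈ Finset.range m, a i j ^ 2
        + h^2 * ∑ i ∈ Finset.range m, ∑ j ∈ Finset.range m, b i j ^ 2 := by ring
end

section
/- Let f be a real trigonometric polynomial of degree at most K on the periodic square [0,L]² (i.e., f ∈ P_K), sampled at the uniform N×N grid with N = 2K+1, giving grid values f_{i,j}. Then the discrete ℓ⁴ norm satisfies ‖f‖₄ ≤ √2 ‖f‖_{L⁴}, where ‖f‖₄⁴ = h²Σ_{i,j}|f_{i,j}|⁴ (h = L/N) and ‖f‖_{L⁴} is the continuous L⁴ norm of f on [0,L]². -/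
/-!
Since `‖f‖⁴ = ‖f²‖²` and every one-variable slice of `f²` is a trigonometric polynomial of
degree `≤ 2K < N`, it suffices to compare the discrete and continuous `L²` norms of such
polynomials in one variable and apply the comparison in each variable in turn. For
`p = ∑_{|n| ≤ M} aₙ eₙ` with `M < N`, expanding `|p|²` gives
`∑ⱼ |p(yⱼ)|² = ∑_{m,n} aₘ conj aₙ S(m - n)`, where the grid sum `S(d) = ∑ⱼ e_d(yⱼ)` vanishes
unless `N ∣ d` and has modulus at most `N`. Each residue class mod `N` meets `[-M, M]` at most
twice, so the Schur test gives `∑ⱼ |p(yⱼ)|² ≤ 2N ∑ |aₙ|² = (2N / L) ∫ |p|²` by Parseval. In two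
variables this gives `h² ∑ᵢⱼ |f²|² ≤ 4 ∫∫ |f²|²`, and `4 ^ (1/4) = √2`.
-/

open Finset Complex Real
open scoped Pointwise ComplexConjugate

section

variable {L : ℝ}

noncomputable def trigPoly (L : ℝ) (M : ℕ) : Submodule ℂ (ℝ → ℂ) :=
  Submodule.span ℂ
    ((fun n : ℤ => fun x : ℝ => fourier n (x : AddCircle L)) '' Set.Icc (-(M : ℤ)) M)

theorem mem_trigPoly_iff {M : ℕ} {p : ℝ → ℂ} :
    p ∈ trigPoly L M ↔
      ∃ a : ℤ → ℂ, ∀ x, p x = ∑ n ∈ Icc (-(M : ℤ)) M, a n * fourier n (x : AddCircle L) := by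
  constructor
  · intro hp
    induction hp using Submodule.span_induction with
    | mem p hp =>
      obtain ⟨n, hn, rfl⟩ := hp
      refine ⟨Pi.single n 1, fun x => ?_⟩
      simp [Pi.single_apply, Finset.mem_Icc.mpr hn]
    | zero => exact ⟨0, by simp⟩
    | add p q _ _ hp hq =>
      obtain ⟨a, ha⟩ := hp
      obtain ⟨b, hb⟩ := hq
      exact ⟨a + b, fun x => by simp [ha, hb, add_mul, sum_add_distrib]⟩
    | smul r p _ hp =>
      obtain ⟨a, ha⟩ := hp
      exact ⟨r • a, fun x => by simp [ha, mul_sum, mul_assoc]⟩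
  · rintro ⟨a, ha⟩
    rw [show p = ∑ n ∈ Icc (-(M : ℤ)) M, a n • fun x : ℝ => fourier n (x : AddCircle L) from
      funext fun x => by simp [ha]]
    exact Submodule.sum_mem _ fun n hn =>
      Submodule.smul_mem _ _ (Submodule.subset_span ⟨n, by simpa using hn, rfl⟩)

theorem mul_mem_trigPoly {M M' : ℕ} {p q : ℝ → ℂ} (hp : p ∈ trigPoly L M)
    (hq : q ∈ trigPoly L M') : p * q ∈ trigPoly L (M + M') := by
  have hle : trigPoly L M * trigPoly L M' ≤ trigPoly L (M + M') := by
    rw [trigPoly, trigPoly, Submodule.span_mul_span]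
    refine Submodule.span_mono (Set.mul_subset_iff.mpr ?_)
    rintro _ ⟨m, hm, rfl⟩ _ ⟨n, hn, rfl⟩
    refine ⟨m + n, ?_, funext fun x => fourier_add⟩
    simp only [Set.mem_Icc] at hm hn ⊢
    omega
  exact hle (Submodule.mul_mem_mul hp hq)

theorem intervalIntegral_fourier (hL : L ≠ 0) (n : ℤ) :
    ∫ x in (0 : ℝ)..L, fourier n (x : AddCircle L) = if n = 0 then (L : ℂ) else 0 := by
  split_ifs with hn
  · simp [hn]
  have hL' : (L : ℂ) ≠ 0 := ofReal_ne_zero.mpr hL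
  have hc : 2 * π * I * n / L ≠ 0 := by simp [Real.pi_ne_zero, I_ne_zero, hn, hL']
  simp_rw [fourier_coe_apply, show ∀ x : ℝ, 2 * π * I * n * x / L = 2 * π * I * n / L * x
    from fun x => by ring]
  rw [integral_exp_mul_complex hc, div_mul_cancel₀ _ hL',
    show 2 * π * I * n = n * (2 * π * I) by ring, exp_int_mul_two_pi_mul_I]
  simp

theorem ofReal_norm_sq_sum_fourier (s : Finset ℤ) (a : ℤ → ℂ) (x : ℝ) :
    ((‖∑ n ∈ s, a n * fourier n (x : AddCircle L)‖ ^ 2 : ℝ) : ℂ) =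
      ∑ m ∈ s, ∑ n ∈ s, a m * conj (a n) * fourier (m - n) (x : AddCircle L) := by
  rw [ofReal_pow, ← mul_conj', map_sum, sum_mul_sum]
  refine sum_congr rfl fun m _ => sum_congr rfl fun n _ => ?_
  rw [sub_eq_add_neg, fourier_add, fourier_neg, map_mul]
  ring


theorem intervalIntegral_norm_sq_sum_fourier (hL : L ≠ 0) (s : Finset ℤ) (a : ℤ → ℂ) :
    ∫ x in (0 : ℝ)..L, ‖∑ n ∈ s, a n * fourier n (x : AddCircle L)‖ ^ 2 =
      L * ∑ n ∈ s, ‖a n‖ ^ 2 := by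
  have hcont : ∀ (d : ℤ) (b : ℂ), Continuous fun x : ℝ => b * fourier d (x : AddCircle L) :=
    fun d b => by fun_prop
  apply ofReal_injective
  rw [← intervalIntegral.integral_ofReal]
  simp_rw [ofReal_norm_sq_sum_fourier]
  rw [intervalIntegral.integral_finsetSum fun m _ =>
    (continuous_finsetSum _ fun n _ => hcont _ _).intervalIntegrable _ _]
  simp_rw [intervalIntegral.integral_finsetSum fun n _ => (hcont _ _).intervalIntegrable _ _,
    intervalIntegral.integral_const_mul, intervalIntegral_fourier hL, sub_eq_zero,
    mul_ite, mul_zero, sum_ite_eq, mul_conj']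
  push_cast
  simp [mul_sum, mul_comm]

theorem norm_sum_fourier_grid_le (hL : L ≠ 0) (N : ℕ) (d : ℤ) :
    ‖∑ j ∈ range N, fourier d (((j + 1 / 2) * (L / N) : ℝ) : AddCircle L)‖ ≤
      if (N : ℤ) ∣ d then (N : ℝ) else 0 := by
  split_ifs with hd
  · refine (norm_sum_le _ _).trans ?_
    simp only [fourier_apply, Circle.norm_coe, sum_const, card_range, nsmul_eq_mul, mul_one,
      le_refl]
  rcases N.eq_zero_or_pos with rfl | hN
  · simp
  -- the samples of `e_d` form a geometric progression whose ratio is an `N`-th root of unity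
  set r := exp (2 * π * I * d / N)
  have hN' : (N : ℂ) ≠ 0 := by exact_mod_cast hN.ne'
  have hL' : (L : ℂ) ≠ 0 := ofReal_ne_zero.mpr hL
  have hterm : ∀ j : ℕ, fourier d (((j + 1 / 2) * (L / N) : ℝ) : AddCircle L) =
      exp (π * I * d / N) * r ^ j := by
    intro j
    rw [fourier_coe_apply, ← Complex.exp_nat_mul, ← Complex.exp_add]
    congr 1
    push_cast
    field_simp
    ring
  have hr : r ≠ 1 := by
    intro h
    obtain ⟨k, hk⟩ := exp_eq_one_iff.mp h
    refine hd ⟨k, ?_⟩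
    field_simp at hk
    exact_mod_cast hk
  have hrN : r ^ N = 1 := by
    rw [← Complex.exp_nat_mul, show (N : ℂ) * (2 * π * I * d / N) = d * (2 * π * I) by field_simp,
      exp_int_mul_two_pi_mul_I]
  rw [sum_congr rfl fun j _ => hterm j, ← mul_sum, geom_sum_eq hr, hrN, sub_self, zero_div,
    mul_zero, norm_zero]

theorem card_filter_dvd_sub_le_two {N : ℕ} {a b : ℤ} (hab : b - a < 2 * N) (m : ℤ) :
    #{n ∈ Icc a b | (N : ℤ) ∣ m - n} ≤ 2 := by
  -- `n ↦ (n - a) / N` is injective on a residue class and takes only the values `0` and `1`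
  calc #{n ∈ Icc a b | (N : ℤ) ∣ m - n} ≤ #({0, 1} : Finset ℤ) := by
        refine card_le_card_of_injOn (fun n => (n - a) / N) ?_ ?_
        · intro n hn
          simp only [coe_filter, Finset.mem_Icc, Set.mem_ofPred_eq] at hn
          have h0 : 0 ≤ (n - a) / N := Int.ediv_nonneg (by linarith) (by positivity)
          have h2 : (n - a) / N < 2 := Int.ediv_lt_of_lt_mul (by omega) (by linarith)
          simp only [coe_insert, coe_singleton, Set.mem_insert_iff, Set.mem_singleton_iff]
          omega
        · intro n hn n' hn' hq
          simp only [coe_filter, Set.mem_ofPred_eq] at hn hn'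
          have hmod : (n - a) % N = (n' - a) % N :=
            Int.ModEq.eq (Int.modEq_iff_dvd.mpr (by simpa using dvd_sub hn.2 hn'.2))
          linarith [Int.mul_ediv_add_emod (n - a) N, Int.mul_ediv_add_emod (n' - a) N,
            show (N : ℤ) * ((n - a) / N) = N * ((n' - a) / N) from congrArg _ hq]
    _ ≤ 2 := card_le_two

theorem schur_test {ι : Type*} (s : Finset ι) (u : ι → ℝ) (w : ι → ι → ℝ) {B : ℝ}
    (hw : ∀ i ∈ s, ∀ j ∈ s, 0 ≤ w i j) (hsymm : ∀ i ∈ s, ∀ j ∈ s, w i j = w j i)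
    (hB : ∀ i ∈ s, ∑ j ∈ s, w i j ≤ B) :
    ∑ i ∈ s, ∑ j ∈ s, u i * u j * w i j ≤ B * ∑ i ∈ s, u i ^ 2 := by
  have hswap : ∑ i ∈ s, ∑ j ∈ s, u j ^ 2 * w i j = ∑ i ∈ s, ∑ j ∈ s, u i ^ 2 * w i j := by
    rw [sum_comm]
    exact sum_congr rfl fun i hi => sum_congr rfl fun j hj => by rw [hsymm j hj i hi]
  calc ∑ i ∈ s, ∑ j ∈ s, u i * u j * w i j
      ≤ ∑ i ∈ s, ∑ j ∈ s, (u i ^ 2 * w i j + u j ^ 2 * w i j) / 2 :=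
        sum_le_sum fun i hi => sum_le_sum fun j hj => by
          nlinarith [mul_nonneg (sq_nonneg (u i - u j)) (hw i hi j hj)]
    _ = ∑ i ∈ s, u i ^ 2 * ∑ j ∈ s, w i j := by
        simp_rw [← sum_div, sum_add_distrib, hswap, mul_sum]
        ring
    _ ≤ B * ∑ i ∈ s, u i ^ 2 := by
        rw [mul_sum]
        exact sum_le_sum fun i hi => by
          rw [mul_comm B]; exact mul_le_mul_of_nonneg_left (hB i hi) (sq_nonneg _)

theorem sum_grid_norm_sq_sum_fourier_le (hL : L ≠ 0) {M N : ℕ} (hMN : M < N) (a : ℤ → ℂ) :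
    ∑ j ∈ range N,
        ‖∑ n ∈ Icc (-(M : ℤ)) M, a n * fourier n (((j + 1 / 2) * (L / N) : ℝ) : AddCircle L)‖ ^ 2
      ≤ 2 * N * ∑ n ∈ Icc (-(M : ℤ)) M, ‖a n‖ ^ 2 := by
  set s := Icc (-(M : ℤ)) M
  set W : ℤ → ℤ → ℝ := fun m n => if (N : ℤ) ∣ m - n then (N : ℝ) else 0
  have hgrid : ((∑ j ∈ range N,
        ‖∑ n ∈ s, a n * fourier n (((j + 1 / 2) * (L / N) : ℝ) : AddCircle L)‖ ^ 2 : ℝ) : ℂ) =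
      ∑ m ∈ s, ∑ n ∈ s, a m * conj (a n) *
        ∑ j ∈ range N, fourier (m - n) (((j + 1 / 2) * (L / N) : ℝ) : AddCircle L) := by
    rw [ofReal_sum]
    simp_rw [ofReal_norm_sq_sum_fourier, mul_sum]
    rw [sum_comm]
    exact sum_congr rfl fun m _ => sum_comm
  have hrow : ∀ m ∈ s, ∑ n ∈ s, W m n ≤ 2 * N := by
    intro m _
    rw [← sum_filter, sum_const, nsmul_eq_mul]
    gcongr
    exact_mod_cast card_filter_dvd_sub_le_two (a := -(M : ℤ)) (b := M) (by omega) m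
  calc ∑ j ∈ range N,
        ‖∑ n ∈ s, a n * fourier n (((j + 1 / 2) * (L / N) : ℝ) : AddCircle L)‖ ^ 2
      = ‖∑ m ∈ s, ∑ n ∈ s, a m * conj (a n) *
          ∑ j ∈ range N, fourier (m - n) (((j + 1 / 2) * (L / N) : ℝ) : AddCircle L)‖ := by
        rw [← hgrid, norm_real, Real.norm_of_nonneg (by positivity)]
    _ ≤ ∑ m ∈ s, ∑ n ∈ s, ‖a m‖ * ‖a n‖ * W m n := by
        refine (norm_sum_le _ _).trans (sum_le_sum fun m _ => (norm_sum_le _ _).trans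
          (sum_le_sum fun n _ => ?_))
        rw [norm_mul, norm_mul, RCLike.norm_conj]
        gcongr
        exact norm_sum_fourier_grid_le hL N (m - n)
    _ ≤ 2 * N * ∑ n ∈ s, ‖a n‖ ^ 2 :=
        schur_test s _ W (fun m _ n _ => by positivity)
          (fun m _ n _ => if_congr dvd_sub_comm rfl rfl) hrow

theorem sum_grid_norm_sq_le_of_mem_trigPoly (hL : 0 < L) {M N : ℕ} (hMN : M < N) {p : ℝ → ℂ}
    (hp : p ∈ trigPoly L M) :
    L / N * ∑ j ∈ range N, ‖p ((j + 1 / 2) * (L / N))‖ ^ 2 ≤ 2 * ∫ x in (0 : ℝ)..L, ‖p x‖ ^ 2 := by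
  obtain ⟨a, ha⟩ := mem_trigPoly_iff.mp hp
  have hN : (0 : ℝ) < N := by exact_mod_cast M.zero_le.trans_lt hMN
  simp only [ha]
  rw [intervalIntegral_norm_sq_sum_fourier hL.ne']
  calc L / N * ∑ j ∈ range N, ‖∑ n ∈ Icc (-(M : ℤ)) M,
          a n * fourier n (((j + 1 / 2) * (L / N) : ℝ) : AddCircle L)‖ ^ 2
      ≤ L / N * (2 * N * ∑ n ∈ Icc (-(M : ℤ)) M, ‖a n‖ ^ 2) :=
        mul_le_mul_of_nonneg_left (sum_grid_norm_sq_sum_fourier_le hL.ne' hMN a) (by positivity)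
    _ = 2 * (L * ∑ n ∈ Icc (-(M : ℤ)) M, ‖a n‖ ^ 2) := by
        field_simp

theorem sum_sum_grid_norm_sq_le_of_mem_trigPoly (hL : 0 < L) {M N : ℕ} (hMN : M < N)
    {g : ℝ → ℝ → ℂ} (hg : Continuous (Function.uncurry g)) (hrow : ∀ x, g x ∈ trigPoly L M)
    (hcol : ∀ y, (fun x => g x y) ∈ trigPoly L M) :
    (L / N) ^ 2 * ∑ i ∈ range N, ∑ j ∈ range N,
        ‖g ((i + 1 / 2) * (L / N)) ((j + 1 / 2) * (L / N))‖ ^ 2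
      ≤ 4 * ∫ x in (0 : ℝ)..L, ∫ y in (0 : ℝ)..L, ‖g x y‖ ^ 2 := by
  set t : ℕ → ℝ := fun j => (j + 1 / 2) * (L / N)
  have hcont : Continuous fun z : ℝ × ℝ => ‖g z.1 z.2‖ ^ 2 := (continuous_norm.comp hg).pow 2
  have hslice : ∀ y, Continuous fun x => ‖g x y‖ ^ 2 :=
    fun y => hcont.comp (continuous_id.prodMk continuous_const)
  have hsum : IntervalIntegrable (fun x => L / N * ∑ j ∈ range N, ‖g x (t j)‖ ^ 2)
      MeasureTheory.volume 0 L :=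
    (continuous_const.mul (continuous_finsetSum _ fun j _ => hslice _)).intervalIntegrable _ _
  have hint : IntervalIntegrable (fun x => 2 * ∫ y in (0 : ℝ)..L, ‖g x y‖ ^ 2)
      MeasureTheory.volume 0 L :=
    (continuous_const.mul (intervalIntegral.continuous_parametric_intervalIntegral_of_continuous'
      hcont 0 L)).intervalIntegrable _ _
  calc (L / N) ^ 2 * ∑ i ∈ range N, ∑ j ∈ range N, ‖g (t i) (t j)‖ ^ 2
      = L / N * ∑ j ∈ range N, (L / N * ∑ i ∈ range N, ‖g (t i) (t j)‖ ^ 2) := by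
        rw [sum_comm, mul_sum, mul_sum, sq]
        simp_rw [mul_assoc]
    _ ≤ L / N * ∑ j ∈ range N, 2 * ∫ x in (0 : ℝ)..L, ‖g x (t j)‖ ^ 2 := by
        refine mul_le_mul_of_nonneg_left (sum_le_sum fun j _ => ?_) (by positivity)
        exact sum_grid_norm_sq_le_of_mem_trigPoly hL hMN (hcol (t j))
    _ = 2 * ∫ x in (0 : ℝ)..L, L / N * ∑ j ∈ range N, ‖g x (t j)‖ ^ 2 := by
        rw [intervalIntegral.integral_const_mul, intervalIntegral.integral_finsetSum fun j _ =>
          (hslice _).intervalIntegrable _ _, mul_sum,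
          mul_sum, mul_sum]
        simp_rw [mul_left_comm]
    _ ≤ 2 * ∫ x in (0 : ℝ)..L, 2 * ∫ y in (0 : ℝ)..L, ‖g x y‖ ^ 2 := by
        gcongr
        exact intervalIntegral.integral_mono_on hL.le hsum hint fun x _ =>
          sum_grid_norm_sq_le_of_mem_trigPoly hL hMN (hrow x)
    _ = 4 * ∫ x in (0 : ℝ)..L, ∫ y in (0 : ℝ)..L, ‖g x y‖ ^ 2 := by
        rw [intervalIntegral.integral_const_mul]
        ring

theorem cexp_eq_fourier_mul_fourier (ℓ m : ℤ) (x y : ℝ) :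
    exp (2 * π * I * (ℓ * x + m * y) / L) =
      fourier ℓ (x : AddCircle L) * fourier m (y : AddCircle L) := by
  rw [fourier_coe_apply, fourier_coe_apply, ← Complex.exp_add]
  ring_nf

end

theorem discrete_l4_le_continuous_L4_general (K : ℕ) (L : ℝ) (hL : 0 < L)
    (c : ℤ → ℤ → ℂ) (f : ℝ → ℝ → ℂ)
    (hf : ∀ x y : ℝ, f x y =
      ∑ ℓ ∈ Finset.Icc (-(K:ℤ)) K, ∑ m ∈ Finset.Icc (-(K:ℤ)) K,
        c ℓ m * Complex.exp (2 * Real.pi * Complex.I * (ℓ * x + m * y) / L)) :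
    let N : ℕ := 2 * K + 1
    let h : ℝ := L / N
    (h^2 * ∑ i ∈ Finset.range N, ∑ j ∈ Finset.range N,
        ‖f ((i + 1/2) * h) ((j + 1/2) * h)‖^4) ^ ((1:ℝ)/4)
      ≤ Real.sqrt 2 *
        (∫ x in (0:ℝ)..L, ∫ y in (0:ℝ)..L, ‖f x y‖^4) ^ ((1:ℝ)/4) := by
  intro N h
  simp only [cexp_eq_fourier_mul_fourier] at hf
  have hrow : ∀ x, f x ∈ trigPoly L K := fun x => mem_trigPoly_iff.mpr
    ⟨fun m => ∑ ℓ ∈ Icc (-(K : ℤ)) K, c ℓ m * fourier ℓ (x : AddCircle L), fun y => by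
      rw [hf, sum_comm]
      simp_rw [sum_mul, mul_assoc]⟩
  have hcol : ∀ y, (fun x => f x y) ∈ trigPoly L K := fun y => mem_trigPoly_iff.mpr
    ⟨fun ℓ => ∑ m ∈ Icc (-(K : ℤ)) K, c ℓ m * fourier m (y : AddCircle L), fun x => by
      rw [hf]
      simp_rw [sum_mul, mul_assoc, mul_comm (fourier _ (y : AddCircle L))]⟩
  have hcont : Continuous (Function.uncurry f) := by
    rw [show Function.uncurry f = _ from funext fun z : ℝ × ℝ => hf z.1 z.2]
    fun_prop
  have hsq := sum_sum_grid_norm_sq_le_of_mem_trigPoly hL (M := K + K) (N := N) (by omega)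
    (g := fun x y => f x y * f x y) (hcont.mul hcont)
    (fun x => mul_mem_trigPoly (hrow x) (hrow x)) (fun y => mul_mem_trigPoly (hcol y) (hcol y))
  simp only [← sq, norm_pow, ← pow_mul] at hsq
  have hI : 0 ≤ ∫ x in (0 : ℝ)..L, ∫ y in (0 : ℝ)..L, ‖f x y‖ ^ 4 :=
    intervalIntegral.integral_nonneg hL.le fun x _ =>
      intervalIntegral.integral_nonneg hL.le fun y _ => by positivity
  calc _ ≤ (4 * ∫ x in (0 : ℝ)..L, ∫ y in (0 : ℝ)..L, ‖f x y‖ ^ 4) ^ (1 / 4 : ℝ) :=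
        Real.rpow_le_rpow (by positivity) hsq (by norm_num)
    _ = _ := by
        rw [Real.mul_rpow (by norm_num) hI, Real.sqrt_eq_rpow,
          show (4 : ℝ) = 2 ^ (2 : ℝ) by norm_num, ← Real.rpow_mul (by norm_num)]
        norm_num

/-- Lemma A.2 (p = 4): the discrete ℓ⁴ norm of a trigonometric polynomial of
degree ≤ K, sampled at the uniform N×N cell-centered grid with N = 2K+1, is
bounded by √2 times its continuous L⁴ norm on [0,L]². -/
theorem discrete_l4_le_continuous_L4 (K : ℕ) (L : ℝ) (hL : 0 < L)
    (c : ℤ → ℤ → ℂ) (f : ℝ → ℝ → ℂ)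
    (hf : ∀ x y : ℝ, f x y =
      ∑ ℓ ∈ Finset.Icc (-(K:ℤ)) K, ∑ m ∈ Finset.Icc (-(K:ℤ)) K,
        c ℓ m * Complex.exp (2 * Real.pi * Complex.I * (ℓ * x + m * y) / L))
    (hreal : ∀ x y : ℝ, (f x y).im = 0) :
    let N : ℕ := 2 * K + 1
    let h : ℝ := L / N
    (h^2 * ∑ i ∈ Finset.range N, ∑ j ∈ Finset.range N,
        ‖f ((i + 1/2) * h) ((j + 1/2) * h)‖^4) ^ ((1:ℝ)/4)
      ≤ Real.sqrt 2 *
        (∫ x in (0:ℝ)..L, ∫ y in (0:ℝ)..L, ‖f x y‖^4) ^ ((1:ℝ)/4) :=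
  discrete_l4_le_continuous_L4_general K L hL c f hf
end
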